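/- Let F, f_s : ℝ^d → ℝ be L-smooth, F μ-PL with global minimum F(x_*), and suppose for all x: ‖∇F(x)‖² ≤ V₁, V₂ ≤ ‖∇f_s(x)‖² ≤ V₁ with 0 < V₂ ≤ V₁, and ‖∇f_s(x) - ∇F(x)‖² ≤ V₃. Let 0 < γ < min(1, 1/L), α > 0, ρ ≥ α√γ·V₁/(2μV₂) with 2μρV₂/V₁ ≤ 1. Suppose each update satisfies x_t = x_{t-1} - γg_t where ‖g_t‖² = ‖∇f_s(x_{τ_t})‖², γ⟨∇f_s(x_{τ_t}), g_t⟩ - ρ‖g_t‖² ≥ -γε for ε ≥ 0, and t - 1 - τ_t ≤ k. Then F(x_T) - F(x_*) ≤ (1 - α√γ)^T (F(x_0) - F(x_*)) + (√γ/α)·C·(k²V₁ + V₃ + ε + V₁) for an absolute constant C depending only on L. -/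

import Mathlib

open RealInnerProductSpace

/-!
The descent inequality for `F` along `-γ g_t`, with `⟨∇F(x_{t-1}), g_t⟩` replaced by the
validation gradient `⟨∇f_s(x_{τ_t}), g_t⟩` at the cost of `2γV₁`, together with the acceptance
test and PL bound `F - F(x_*) ≤ V₁ / (2μ)`, gives the contraction
`F(x_t) - F_* ≤ (1 - α√γ)(F(x_{t-1}) - F_*) + γ(ε + 2V₁ + LγV₁/2)`.
Unrolling it, the additive terms sum to at most `γ(ε + 3V₁) / (α√γ) = (√γ/α)(ε + 3V₁)`.
-/

section

variable {E : Type*} [NormedAddCommGroup E] [InnerProductSpace ℝ E]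

lemma real_inner_le_of_sq_norm_le {a b : E} {V : ℝ} (ha : ‖a‖ ^ 2 ≤ V) (hb : ‖b‖ ^ 2 ≤ V) :
    ⟪a, b⟫ ≤ V := by
  nlinarith [real_inner_le_norm a b, two_mul_le_add_sq ‖a‖ ‖b‖]

lemma le_sub_smul_of_upper_quadratic {F : E → ℝ} {F' : E → E} {L : ℝ}
    (hsmooth : ∀ y z, F z - F y ≤ ⟪F' y, z - y⟫ + L / 2 * ‖z - y‖ ^ 2) (y v : E) (γ : ℝ) :
    F (y - γ • v) ≤ F y - γ * ⟪F' y, v⟫ + L / 2 * γ ^ 2 * ‖v‖ ^ 2 := by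
  have h := hsmooth y (y - γ • v)
  rw [sub_sub_cancel_left, inner_neg_right, real_inner_smul_right, norm_neg, norm_smul,
    Real.norm_eq_abs, mul_pow, sq_abs] at h
  linarith

lemma sub_le_one_sub_mul_add_of_accepted_step {F : E → ℝ} {F' : E → E}
    {L μ q ρ γ ε V₁ V₂ Fstar : ℝ}
    (hsmooth : ∀ y z, F z - F y ≤ ⟪F' y, z - y⟫ + L / 2 * ‖z - y‖ ^ 2)
    (hPL : ∀ y, F y - Fstar ≤ 1 / (2 * μ) * ‖F' y‖ ^ 2) (hF' : ∀ y, ‖F' y‖ ^ 2 ≤ V₁)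
    (hL : 0 ≤ L) (hμ : 0 < μ) (hV₂ : 0 < V₂) (hq : 0 ≤ q) (hρ : q * V₁ / (2 * μ * V₂) ≤ ρ)
    (hγ : 0 ≤ γ) {y v w : E} (hwV₁ : ‖w‖ ^ 2 ≤ V₁) (hwV₂ : V₂ ≤ ‖w‖ ^ 2)
    (hv : ‖v‖ ^ 2 = ‖w‖ ^ 2) (hacc : γ * ⟪w, v⟫ - ρ * ‖v‖ ^ 2 ≥ -(γ * ε)) :
    F (y - γ • v) - Fstar ≤ (1 - q) * (F y - Fstar) + γ * (ε + 2 * V₁ + L * γ / 2 * V₁) := by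
  have hvV₁ : ‖v‖ ^ 2 ≤ V₁ := hv ▸ hwV₁
  have hdescent := le_sub_smul_of_upper_quadratic hsmooth y v γ
  have hstale : ⟪w, v⟫ - ⟪F' y, v⟫ ≤ 2 * V₁ := by
    have hw := real_inner_le_of_sq_norm_le hwV₁ hvV₁
    have hF'y := real_inner_le_of_sq_norm_le (norm_neg (F' y) ▸ hF' y) hvV₁
    rw [inner_neg_left] at hF'y
    linarith
  have hsub : F y - Fstar ≤ V₁ / (2 * μ) :=
    calc F y - Fstar ≤ 1 / (2 * μ) * ‖F' y‖ ^ 2 := hPL y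
      _ ≤ 1 / (2 * μ) * V₁ := by gcongr; exact hF' y
      _ = V₁ / (2 * μ) := by ring
  have hV₁ : 0 ≤ V₁ := (sq_nonneg _).trans hwV₁
  have hρ0 : 0 ≤ ρ := hρ.trans' (by positivity)
  have hcontract : q * (F y - Fstar) ≤ ρ * ‖v‖ ^ 2 :=
    calc q * (F y - Fstar) ≤ q * (V₁ / (2 * μ)) := by gcongr
      _ = q * V₁ / (2 * μ * V₂) * V₂ := by field_simp
      _ ≤ ρ * V₂ := by gcongr
      _ ≤ ρ * ‖v‖ ^ 2 := by rw [hv]; gcongr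
  have hquad : L / 2 * γ ^ 2 * ‖v‖ ^ 2 ≤ L / 2 * γ ^ 2 * V₁ :=
    mul_le_mul_of_nonneg_left hvV₁ (by positivity)
  linarith [mul_le_mul_of_nonneg_left hstale hγ]

end

lemma le_one_sub_pow_mul_add_div_of_le_one_sub_mul_add {u : ℕ → ℝ} {q B : ℝ} {T : ℕ}
    (hq : 0 < q) (hq1 : q ≤ 1) (hB : 0 ≤ B) (h : ∀ n < T, u (n + 1) ≤ (1 - q) * u n + B) :
    ∀ n ≤ T, u n ≤ (1 - q) ^ n * u 0 + B / q := by
  intro n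
  induction n with
  | zero => intro; simp only [pow_zero, one_mul, le_add_iff_nonneg_right]; positivity
  | succ n ih =>
    intro hn
    calc u (n + 1) ≤ (1 - q) * u n + B := h n hn
      _ ≤ (1 - q) * ((1 - q) ^ n * u 0 + B / q) + B := by
          have h1q : 0 ≤ 1 - q := by linarith
          gcongr
          exact ih (by omega)
      _ = (1 - q) ^ (n + 1) * u 0 + B / q := by field_simp; ring

theorem stmt9 (L : ℝ) (hL : 0 < L) :
    ∃ C : ℝ, 0 < C ∧
      ∀ (d : ℕ) (F fs : EuclideanSpace ℝ (Fin d) → ℝ)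
        (xstar : EuclideanSpace ℝ (Fin d))
        (μ γ α ρ ε V₁ V₂ V₃ : ℝ) (k T : ℕ)
        (x g : ℕ → EuclideanSpace ℝ (Fin d)) (τ : ℕ → ℕ),
        Differentiable ℝ F → Differentiable ℝ fs →
        0 < μ →
        (∀ y z, F z - F y ≤ ⟪gradient F y, z - y⟫ + L / 2 * ‖z - y‖ ^ 2) →
        (∀ y z, fs z - fs y ≤ ⟪gradient fs y, z - y⟫ + L / 2 * ‖z - y‖ ^ 2) →
        (∀ y, F xstar ≤ F y) →
        (∀ y, F y - F xstar ≤ 1 / (2 * μ) * ‖gradient F y‖ ^ 2) →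
        (∀ y, ‖gradient F y‖ ^ 2 ≤ V₁) →
        (∀ y, V₂ ≤ ‖gradient fs y‖ ^ 2) →
        (∀ y, ‖gradient fs y‖ ^ 2 ≤ V₁) →
        0 < V₂ → V₂ ≤ V₁ →
        (∀ y, ‖gradient fs y - gradient F y‖ ^ 2 ≤ V₃) →
        0 < γ → γ < min 1 (1 / L) →
        0 < α →
        α * Real.sqrt γ * V₁ / (2 * μ * V₂) ≤ ρ →
        2 * μ * ρ * V₂ / V₁ ≤ 1 →
        0 ≤ ε →
        (∀ t : ℕ, 1 ≤ t → t ≤ T →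
          x t = x (t - 1) - γ • g t ∧
          ‖g t‖ ^ 2 = ‖gradient fs (x (τ t))‖ ^ 2 ∧
          γ * ⟪gradient fs (x (τ t)), g t⟫ - ρ * ‖g t‖ ^ 2 ≥ -(γ * ε) ∧
          τ t ≤ t - 1 ∧ (t - 1) - τ t ≤ k) →
        F (x T) - F xstar ≤
          (1 - α * Real.sqrt γ) ^ T * (F (x 0) - F xstar) +
            Real.sqrt γ / α * C * ((k : ℝ) ^ 2 * V₁ + V₃ + ε + V₁) := by
  refine ⟨3, by norm_num, ?_⟩
  intro d F fs xstar μ γ α ρ ε V₁ V₂ V₃ k T x g τ _ _ hμ hsmooth _ _ hPL hF' hfsV₂ hfsV₁ hV₂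
    hV₂₁ hV₃ hγ hγ1 hα hρ hρ1 hε hupd
  set q := α * Real.sqrt γ
  have hq : 0 < q := by positivity
  have hV₁ : 0 < V₁ := hV₂.trans_le hV₂₁
  have hq1 : q ≤ 1 := by
    nlinarith [(div_le_iff₀ (by positivity)).mp hρ, (div_le_one hV₁).mp hρ1]
  have hLγ : L * γ ≤ 1 := ((lt_div_iff₀' hL).mp (hγ1.trans_le (min_le_right _ _))).le
  have hstep : ∀ n < T, F (x (n + 1)) - F xstar ≤
      (1 - q) * (F (x n) - F xstar) + γ * (ε + 2 * V₁ + L * γ / 2 * V₁) := by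
    intro n hn
    obtain ⟨hx, hg, hacc, -, -⟩ := hupd (n + 1) (by omega) hn
    rw [hx, Nat.add_sub_cancel]
    exact sub_le_one_sub_mul_add_of_accepted_step hsmooth hPL hF' hL.le hμ hV₂ hq.le hρ hγ.le
      (hfsV₁ _) (hfsV₂ _) hg hacc
  have hV₃ : 0 ≤ V₃ := (sq_nonneg _).trans (hV₃ xstar)
  have hγq : γ / q = Real.sqrt γ / α := by
    rw [div_eq_div_iff hq.ne' hα.ne']
    linear_combination (-α) * Real.mul_self_sqrt hγ.le
  have hD : ε + 2 * V₁ + L * γ / 2 * V₁ ≤ 3 * ((k : ℝ) ^ 2 * V₁ + V₃ + ε + V₁) := by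
    nlinarith [mul_nonneg (sq_nonneg (k : ℝ)) hV₁.le, mul_le_mul_of_nonneg_right hLγ hV₁.le]
  calc F (x T) - F xstar
      ≤ (1 - q) ^ T * (F (x 0) - F xstar) + γ * (ε + 2 * V₁ + L * γ / 2 * V₁) / q :=
        le_one_sub_pow_mul_add_div_of_le_one_sub_mul_add (u := fun n ↦ F (x n) - F xstar)
          hq hq1 (by positivity) hstep T le_rfl
    _ ≤ (1 - q) ^ T * (F (x 0) - F xstar) +
          Real.sqrt γ / α * (3 * ((k : ℝ) ^ 2 * V₁ + V₃ + ε + V₁)) := by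
        rw [mul_div_right_comm, hγq]
        gcongr
    _ = _ := by ring
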